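/- arXiv:2510.12037 — 6 statements merged into one kernel-verified Lean document; each statement's English description precedes it below -/
import Mathlib

section
/- Let k₀ ∈ ℝ and let φ : [k₀, ∞) → ℝ be a nonnegative, nonincreasing function. Suppose there exist constants C > 0, α > 0 and β > 1 such that φ(h) ≤ C (h − k)^(−α) φ(k)^β whenever h > k > k₀. Then φ(k₀ + d) = 0, where d := (C · φ(k₀)^(β−1) · 2^(αβ/(β−1)))^(1/α). -/
open Real Filter Topology Set

/-- Stampacchia's lemma. -/
theorem stampacchia_lemma
    (k₀ : ℝ) (φ : ℝ → ℝ)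
    (hφ_nonneg : ∀ x : ℝ, k₀ ≤ x → 0 ≤ φ x)
    (hφ_mono : ∀ x y : ℝ, k₀ ≤ x → x ≤ y → φ y ≤ φ x)
    (C α β : ℝ) (hC : 0 < C) (hα : 0 < α) (hβ : 1 < β)
    (hiter : ∀ h k : ℝ, k₀ < k → k < h → φ h ≤ C / (h - k) ^ α * φ k ^ β) :
    φ (k₀ + (C * φ k₀ ^ (β - 1) * 2 ^ (α * β / (β - 1))) ^ (1 / α)) = 0 := by
  have hβ0 : (0:ℝ) < β - 1 := by linarith
  rcases (hφ_nonneg k₀ le_rfl).eq_or_lt with h0 | hφ₀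
  · rw [← h0, Real.zero_rpow hβ0.ne', mul_zero, zero_mul,
      Real.zero_rpow (one_div_ne_zero hα.ne'), add_zero, ← h0]
  set φ₀ := φ k₀ with hφ₀def
  set X : ℝ := C * φ₀ ^ (β - 1) * 2 ^ (α * β / (β - 1)) with hXdef
  have hX : 0 < X := by positivity
  set d : ℝ := X ^ (1 / α) with hddef
  have hd : 0 < d := by positivity
  set r : ℝ := 2 ^ (α / (β - 1)) with hrdef
  have hr1 : 1 < r := by
    rw [hrdef]
    exact Real.one_lt_rpow_iff_of_pos (by norm_num) |>.mpr
      (Or.inl ⟨by norm_num, by positivity⟩)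
  have hr0 : 0 < r := lt_trans one_pos hr1
  -- extend the iteration inequality to k = k₀
  have hiter0 : ∀ h : ℝ, k₀ < h → φ h ≤ C / (h - k₀) ^ α * φ₀ ^ β := by
    intro h hh
    have key : ∀ k ∈ Set.Ioo k₀ h, φ h ≤ C / (h - k) ^ α * φ₀ ^ β := by
      intro k hk
      refine (hiter h k hk.1 hk.2).trans ?_
      have hk1 : (0:ℝ) < h - k := by linarith [hk.2]
      refine mul_le_mul_of_nonneg_left ?_ (by positivity)
      exact Real.rpow_le_rpow (hφ_nonneg k hk.1.le)
        (hφ_mono k₀ k le_rfl hk.1.le) (by positivity)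
    have hcont : Tendsto (fun k : ℝ => C / (h - k) ^ α * φ₀ ^ β) (nhdsWithin k₀ (Set.Ioi k₀))
        (nhds (C / (h - k₀) ^ α * φ₀ ^ β)) := by
      apply Tendsto.mono_left _ nhdsWithin_le_nhds
      apply ContinuousAt.tendsto
      have h1 : ContinuousAt (fun k : ℝ => (h - k) ^ α) k₀ :=
        (continuousAt_const.sub continuousAt_id).rpow_const (Or.inr hα.le)
      have h2 : (fun k : ℝ => (h - k) ^ α) k₀ ≠ 0 :=
        ne_of_gt (Real.rpow_pos_of_pos (by linarith) α)
      exact (continuousAt_const.div h1 h2).mul continuousAt_const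
    refine ge_of_tendsto hcont ?_
    filter_upwards [Ioo_mem_nhdsGT_of_mem ⟨le_refl k₀, hh⟩] with k hk using key k hk
  have hiter' : ∀ h k : ℝ, k₀ ≤ k → k < h → φ h ≤ C / (h - k) ^ α * φ k ^ β := by
    intro h k hk hkh
    rcases hk.eq_or_lt with rfl | hk'
    · exact hiter0 h hkh
    · exact hiter h k hk' hkh
  -- the sequence of levels
  set K : ℕ → ℝ := fun n => k₀ + d - d / 2 ^ n with hKdef
  have hK0 : K 0 = k₀ := by simp [hKdef]
  have hKge : ∀ n, k₀ ≤ K n := by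
    intro n
    have h1 : d / 2 ^ n ≤ d :=
      div_le_self hd.le (one_le_pow₀ (by norm_num))
    simp only [hKdef]
    linarith
  have hKlt : ∀ n, K n < K (n + 1) := by
    intro n
    simp only [hKdef]
    have : d / 2 ^ (n + 1) < d / 2 ^ n := by
      apply div_lt_div_of_pos_left hd (by positivity)
      exact pow_lt_pow_right₀ (by norm_num) (Nat.lt_succ_self n)
    linarith
  have hKle : ∀ n, K n ≤ k₀ + d := by
    intro n
    simp only [hKdef]
    have : 0 < d / 2 ^ n := by positivity
    linarith
  have hKdiff : ∀ n, K (n + 1) - K n = d / 2 ^ (n + 1) := by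
    intro n
    simp only [hKdef]
    field_simp
    ring
  -- logarithm facts
  have hlogd : Real.log d = (1 / α) * (Real.log C + (β - 1) * Real.log φ₀
      + (α * β / (β - 1)) * Real.log 2) := by
    rw [hddef, Real.log_rpow hX, hXdef, Real.log_mul (by positivity) (by positivity),
      Real.log_mul hC.ne' (by positivity), Real.log_rpow hφ₀, Real.log_rpow (by norm_num)]
  have hlogr : Real.log r = α / (β - 1) * Real.log 2 := Real.log_rpow (by norm_num) _
  -- the key algebraic identity
  have key : ∀ n : ℕ, C / (d / 2 ^ (n + 1)) ^ α * (φ₀ / r ^ n) ^ β = φ₀ / r ^ (n + 1) := by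
    intro n
    have hL : 0 < C / (d / 2 ^ (n + 1)) ^ α * (φ₀ / r ^ n) ^ β := by positivity
    have hR : 0 < φ₀ / r ^ (n + 1) := by positivity
    rw [← Real.exp_log hL, ← Real.exp_log hR]
    congr 1
    rw [Real.log_mul (by positivity) (by positivity),
      Real.log_rpow (by positivity : (0:ℝ) < φ₀ / r ^ n),
      Real.log_div hC.ne' (ne_of_gt (by positivity : (0:ℝ) < (d / 2 ^ (n + 1)) ^ α)),
      Real.log_rpow (by positivity : (0:ℝ) < d / 2 ^ (n + 1)),
      Real.log_div hd.ne' (by positivity : ((2:ℝ) ^ (n + 1)) ≠ 0),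
      Real.log_div hφ₀.ne' (by positivity : ((r:ℝ) ^ n) ≠ 0),
      Real.log_div hφ₀.ne' (by positivity : ((r:ℝ) ^ (n + 1)) ≠ 0),
      Real.log_pow, Real.log_pow, Real.log_pow, hlogd, hlogr]
    push_cast
    field_simp
    ring
  -- main induction
  have claim : ∀ n : ℕ, φ (K n) ≤ φ₀ / r ^ n := by
    intro n
    induction n with
    | zero => simp [hK0]; exact le_rfl
    | succ n ih =>
      have h1 := hiter' (K (n + 1)) (K n) (hKge n) (hKlt n)
      rw [hKdiff n] at h1
      refine h1.trans ?_
      rw [← key n]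
      refine mul_le_mul_of_nonneg_left ?_ (by positivity)
      exact Real.rpow_le_rpow (hφ_nonneg _ (hKge n)) ih (by positivity)
  have hle : ∀ n : ℕ, φ (k₀ + d) ≤ φ₀ / r ^ n := fun n =>
    (hφ_mono (K n) (k₀ + d) (hKge n) (hKle n)).trans (claim n)
  have hlim : Tendsto (fun n : ℕ => φ₀ / r ^ n) atTop (nhds 0) :=
    tendsto_const_nhds.div_atTop (tendsto_pow_atTop_atTop_of_one_lt hr1)
  have h1 : φ (k₀ + d) ≤ 0 := ge_of_tendsto hlim (Eventually.of_forall hle)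
  exact le_antisymm h1 (hφ_nonneg _ (by linarith))
end

section
/- Let n ≥ 2 and let Γ ⊆ ℝⁿ be an open symmetric convex cone containing the positive cone. Let f : Γ → ℝ be a differentiable convex function which is symmetric, positively homogeneous of degree one, and satisfies f(1,…,1) = n. Then f(z) ≥ z₁ + … + z_n for every z ∈ Γ with z₁ + … + z_n > 0. -/
/-- A convex, symmetric, one-homogeneous, normalized speed dominates the trace. -/
theorem convex_speed_dominates_trace
    (n : ℕ) (hn : 2 ≤ n)
    (Γ : Set (Fin n → ℝ))
    (hΓ_open : IsOpen Γ)
    (hΓ_cone : ∀ c : ℝ, 0 < c → ∀ z ∈ Γ, c • z ∈ Γ)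
    (hΓ_symm : ∀ σ : Equiv.Perm (Fin n), ∀ z ∈ Γ, (fun i => z (σ i)) ∈ Γ)
    (hΓ_convex : Convex ℝ Γ)
    (hΓ_pos : ∀ z : Fin n → ℝ, (∀ i, 0 < z i) → z ∈ Γ)
    (f : (Fin n → ℝ) → ℝ)
    (hf_diff : DifferentiableOn ℝ f Γ)
    (hf_convex : ConvexOn ℝ Γ f)
    (hf_symm : ∀ σ : Equiv.Perm (Fin n), ∀ z ∈ Γ, f (fun i => z (σ i)) = f z)
    (hf_hom : ∀ c : ℝ, 0 < c → ∀ z ∈ Γ, f (c • z) = c * f z)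
    (hf_norm : f (fun _ => 1) = n) :
    ∀ z ∈ Γ, 0 < ∑ i, z i → (∑ i, z i) ≤ f z := by
  intro z hz hs
  set s : ℝ := ∑ i, z i with hsdef
  have hnpos : (0:ℝ) < n := by
    have : 0 < n := lt_of_lt_of_le (by norm_num) hn
    exact_mod_cast this
  have hNpos : (0:ℝ) < (n.factorial : ℝ) := by
    exact_mod_cast n.factorial_pos
  -- the sum ∑_σ z (σ i) is independent of i
  have hindep : ∀ i j : Fin n,
      (∑ σ : Equiv.Perm (Fin n), z (σ i)) = ∑ σ : Equiv.Perm (Fin n), z (σ j) := by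
    intro i j
    have := Equiv.sum_comp (Equiv.mulRight (Equiv.swap i j))
      (fun σ : Equiv.Perm (Fin n) => z (σ i))
    rw [← this]
    apply Finset.sum_congr rfl
    intro σ _
    simp [Equiv.Perm.mul_apply]
  have hkey : ∀ i : Fin n,
      (∑ σ : Equiv.Perm (Fin n), z (σ i)) = (n.factorial : ℝ) / n * s := by
    intro i
    have htot : (∑ j : Fin n, ∑ σ : Equiv.Perm (Fin n), z (σ j))
        = (n.factorial : ℝ) * s := by
      rw [Finset.sum_comm]
      have : ∀ σ : Equiv.Perm (Fin n), (∑ j : Fin n, z (σ j)) = s := by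
        intro σ; exact Equiv.sum_comp σ z
      rw [Finset.sum_congr rfl (fun σ _ => this σ)]
      simp [Finset.card_univ, Fintype.card_perm]
    have hconst : (∑ j : Fin n, ∑ σ : Equiv.Perm (Fin n), z (σ j))
        = (n : ℝ) * ∑ σ : Equiv.Perm (Fin n), z (σ i) := by
      rw [Finset.sum_congr rfl (fun j _ => hindep j i)]
      simp [Finset.card_univ, mul_comm]
    have := htot.symm.trans hconst
    field_simp
    linarith [this]
  -- Jensen with uniform weights over all permutations
  set w : Equiv.Perm (Fin n) → ℝ := fun _ => ((n.factorial : ℝ))⁻¹ with hw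
  set p : Equiv.Perm (Fin n) → (Fin n → ℝ) := fun σ i => z (σ i) with hp
  have hw0 : ∀ σ ∈ Finset.univ (α := Equiv.Perm (Fin n)), 0 ≤ w σ := by
    intro σ _; positivity
  have hw1 : ∑ σ : Equiv.Perm (Fin n), w σ = 1 := by
    simp [hw, Finset.card_univ, Fintype.card_perm]
    field_simp
  have hpmem : ∀ σ ∈ Finset.univ (α := Equiv.Perm (Fin n)), p σ ∈ Γ := by
    intro σ _; exact hΓ_symm σ z hz
  have hjensen := hf_convex.map_sum_le hw0 hw1 hpmem
  have hbar : (∑ σ : Equiv.Perm (Fin n), w σ • p σ) = (s / n) • (fun _ => (1:ℝ)) := by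
    funext i
    have : (∑ σ : Equiv.Perm (Fin n), w σ • p σ) i
        = ∑ σ : Equiv.Perm (Fin n), ((n.factorial : ℝ))⁻¹ * z (σ i) := by
      simp [hw, hp]
    rw [this, ← Finset.mul_sum, hkey i]
    have : ((s / ↑n) • fun _ : Fin n => (1:ℝ)) i = s / n := by simp
    rw [this]
    field_simp
  have hrhs : (∑ σ : Equiv.Perm (Fin n), w σ • f (p σ)) = f z := by
    have h : ∀ σ : Equiv.Perm (Fin n), w σ • f (p σ) = w σ * f z := by
      intro σ; rw [smul_eq_mul, hf_symm σ z hz]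
    rw [Finset.sum_congr rfl (fun σ _ => h σ), ← Finset.sum_mul, hw1, one_mul]
  have hlhs : f (∑ σ : Equiv.Perm (Fin n), w σ • p σ) = s := by
    rw [hbar]
    have h1 : (fun _ : Fin n => (1:ℝ)) ∈ Γ := hΓ_pos _ (fun _ => one_pos)
    rw [hf_hom (s / n) (by positivity) _ h1, hf_norm]
    field_simp
  rw [hlhs, hrhs] at hjensen
  exact hjensen
end

section
/- Let n ≥ 2 and 0 ≤ m ≤ n − 2. Let Γ ⊆ ℝⁿ be an open symmetric convex cone containing the positive cone, and let f : Γ → ℝ be a differentiable convex function which is symmetric, positively homogeneous of degree one, and satisfies f(1,…,1) = n. Then f(z) > 0 for every nonzero z ∈ Γ such that every sum of m + 1 distinct coordinates of z is nonnegative; in particular f > 0 on Γ ∩ (closure(Γ_{m+1}ⁿ) ∖ {0}). -/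
/-- Combinatorial auxiliary lemma: if `z ≠ 0` and every sum of `m+1` distinct
coordinates of `z` is nonnegative, with `m + 1 < n`, then the total sum is positive. -/
lemma comb_aux_sum_pos (n m : ℕ) (hm : m + 1 < n) (z : Fin n → ℝ)
    (hz0 : z ≠ 0)
    (hS : ∀ S : Finset (Fin n), S.card = m + 1 → 0 ≤ ∑ i ∈ S, z i) :
    0 < ∑ i, z i := by
  -- choose S of size m+1 minimizing the sum
  have hne : (Finset.univ.powersetCard (m+1) : Finset (Finset (Fin n))).Nonempty := by
    apply Finset.powersetCard_nonempty.mpr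
    simp [Finset.card_univ]
    omega
  obtain ⟨S, hSmem, hSmin⟩ := Finset.exists_min_image _ (fun S => ∑ i ∈ S, z i) hne
  have hScard : S.card = m + 1 := (Finset.mem_powersetCard_univ.mp hSmem)
  -- exchange sets
  have hexch_card : ∀ j ∈ S, ∀ i ∉ S, (insert i (S.erase j)).card = m + 1 := by
    intro j hj i hi
    rw [Finset.card_insert_of_notMem (fun h => hi (Finset.erase_subset _ _ h)),
      Finset.card_erase_of_mem hj, hScard]
    omega
  have hexch_sum : ∀ j ∈ S, ∀ i ∉ S,
      ∑ k ∈ insert i (S.erase j), z k = z i + (∑ k ∈ S, z k - z j) := by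
    intro j hj i hi
    rw [Finset.sum_insert (fun h => hi (Finset.erase_subset _ _ h)),
      Finset.sum_erase_eq_sub hj]
  have hexch : ∀ j ∈ S, ∀ i ∉ S, z j ≤ z i := by
    intro j hj i hi
    have h1 := hSmin _ (Finset.mem_powersetCard_univ.mpr (hexch_card j hj i hi))
    rw [hexch_sum j hj i hi] at h1
    linarith
  have hSpos : 0 ≤ ∑ i ∈ S, z i := hS S hScard
  have hSne : S.Nonempty := Finset.card_pos.mp (by omega)
  -- some element of S is nonnegative
  have hjex : ∃ j ∈ S, 0 ≤ z j := by
    by_contra h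
    push_neg at h
    have : ∑ i ∈ S, z i < 0 := Finset.sum_neg h hSne
    linarith
  obtain ⟨j₀, hj₀S, hj₀⟩ := hjex
  have hout : ∀ i ∉ S, 0 ≤ z i := fun i hi => le_trans hj₀ (hexch j₀ hj₀S i hi)
  have hcompl : 0 ≤ ∑ i ∈ Sᶜ, z i :=
    Finset.sum_nonneg (fun i hi => hout i (Finset.mem_compl.mp hi))
  have htot : ∑ i ∈ S, z i + ∑ i ∈ Sᶜ, z i = ∑ i, z i := Finset.sum_add_sum_compl S z
  by_contra hcon
  push_neg at hcon
  have hzero : ∑ i, z i = 0 := le_antisymm hcon (by linarith)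
  have hSsum0 : ∑ i ∈ S, z i = 0 := by linarith
  have hcompl0 : ∑ i ∈ Sᶜ, z i = 0 := by linarith
  have houtz : ∀ i ∉ S, z i = 0 := by
    intro i hi
    have := (Finset.sum_eq_zero_iff_of_nonneg
      (fun k hk => hout k (Finset.mem_compl.mp hk))).mp hcompl0
    exact this i (Finset.mem_compl.mpr hi)
  -- S ≠ univ, get i₀ outside
  have hiex : ∃ i, i ∉ S := by
    by_contra h
    push_neg at h
    have : (Finset.univ : Finset (Fin n)).card ≤ S.card :=
      Finset.card_le_card (fun i _ => h i)
    simp [Finset.card_univ, hScard] at this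
    omega
  obtain ⟨i₀, hi₀⟩ := hiex
  have hinz : ∀ j ∈ S, z j ≤ 0 := by
    intro j hj
    have h1 := hS _ (hexch_card j hj i₀ hi₀)
    rw [hexch_sum j hj i₀ hi₀, houtz i₀ hi₀, hSsum0] at h1
    linarith
  have hinz0 : ∀ j ∈ S, z j = 0 :=
    fun j hj => (Finset.sum_eq_zero_iff_of_nonpos hinz).mp hSsum0 j hj
  apply hz0
  funext i
  by_cases hi : i ∈ S
  · exact hinz0 i hi
  · exact houtz i hi

/-- A convex, symmetric, one-homogeneous, normalized speed is positive on the
closure of the `(m+1)`-positive cone minus the origin. -/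
theorem convex_speed_positive_on_mplus1_cone
    (n m : ℕ) (hn : 2 ≤ n) (hm : m ≤ n - 2)
    (Γ : Set (Fin n → ℝ))
    (hΓ_open : IsOpen Γ)
    (hΓ_cone : ∀ c : ℝ, 0 < c → ∀ z ∈ Γ, c • z ∈ Γ)
    (hΓ_symm : ∀ σ : Equiv.Perm (Fin n), ∀ z ∈ Γ, (fun i => z (σ i)) ∈ Γ)
    (hΓ_convex : Convex ℝ Γ)
    (hΓ_pos : ∀ z : Fin n → ℝ, (∀ i, 0 < z i) → z ∈ Γ)
    (f : (Fin n → ℝ) → ℝ)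
    (hf_diff : DifferentiableOn ℝ f Γ)
    (hf_convex : ConvexOn ℝ Γ f)
    (hf_symm : ∀ σ : Equiv.Perm (Fin n), ∀ z ∈ Γ, f (fun i => z (σ i)) = f z)
    (hf_hom : ∀ c : ℝ, 0 < c → ∀ z ∈ Γ, f (c • z) = c * f z)
    (hf_norm : f (fun _ => 1) = n) :
    ∀ z ∈ Γ, z ≠ 0 →
      (∀ S : Finset (Fin n), S.card = m + 1 → 0 ≤ ∑ i ∈ S, z i) →
      0 < f z := by
  have hm1 : m + 1 < n := by omega
  set one : Fin n → ℝ := fun _ => 1 with hone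
  have h1Γ : one ∈ Γ := hΓ_pos one (fun _ => one_pos)
  have hmem : Γ ∈ nhds one := hΓ_open.mem_nhds h1Γ
  have hdiff : DifferentiableAt ℝ f one := (hf_diff one h1Γ).differentiableAt hmem
  set D := fderiv ℝ f one with hDdef
  have hfd : HasFDerivAt f D one := hdiff.hasFDerivAt
  have hfone : f one = n := hf_norm
  -- Euler relation at `one`: D one = f one = n
  have hEuler : D one = (n : ℝ) := by
    have hφ : HasDerivAt (fun c : ℝ => c • one) one 1 := by
      simpa using (hasDerivAt_id (1 : ℝ)).smul_const one
    have hfd' : HasFDerivAt f D ((fun c : ℝ => c • one) 1) := by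
      simpa using hfd
    have hcomp : HasDerivAt (f ∘ fun c : ℝ => c • one) (D one) 1 :=
      hfd'.comp_hasDerivAt 1 hφ
    have heq : (f ∘ fun c : ℝ => c • one) =ᶠ[nhds 1] (fun c : ℝ => c * f one) := by
      filter_upwards [Ioi_mem_nhds (by norm_num : (0:ℝ) < 1)] with c hc
      exact hf_hom c hc one h1Γ
    have hlin : HasDerivAt (fun c : ℝ => c * f one) (f one) 1 := by
      simpa using (hasDerivAt_id (1 : ℝ)).mul_const (f one)
    have hcomp' : HasDerivAt (f ∘ fun c : ℝ => c • one) (f one) 1 :=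
      hlin.congr_of_eventuallyEq heq
    rw [hcomp.unique hcomp', hfone]
  -- Symmetry: all partial derivatives at `one` agree
  have hswap : ∀ i j : Fin n, D (Pi.single i 1) = D (Pi.single j 1) := by
    intro i j
    set σ : Equiv.Perm (Fin n) := Equiv.swap i j with hσ
    set P : (Fin n → ℝ) →L[ℝ] (Fin n → ℝ) :=
      ContinuousLinearMap.pi (fun k => ContinuousLinearMap.proj (σ k)) with hP
    have hPapp : ∀ w : Fin n → ℝ, P w = fun k => w (σ k) := fun _ => rfl
    have hPone : P one = one := rfl
    have hfdP' : HasFDerivAt f D (P one) := by rw [hPone]; exact hfd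
    have hcompP : HasFDerivAt (f ∘ P) (D.comp P) one := hfdP'.comp one P.hasFDerivAt
    have heqP : (f ∘ P) =ᶠ[nhds one] f := by
      filter_upwards [hmem] with w hw
      exact hf_symm σ w hw
    have hfdP : HasFDerivAt (f ∘ P) D one := hfd.congr_of_eventuallyEq heqP
    have hDP : D.comp P = D := hcompP.unique hfdP
    have hsingle : P (Pi.single j 1) = Pi.single i 1 := by
      funext k
      rw [hPapp]
      have hiff : σ k = j ↔ k = i := by
        rw [hσ, Equiv.apply_eq_iff_eq_symm_apply, Equiv.symm_swap, Equiv.swap_apply_right]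
      simp [Pi.single_apply, hiff]
    calc D (Pi.single i 1) = D (P (Pi.single j 1)) := by rw [hsingle]
      _ = (D.comp P) (Pi.single j 1) := rfl
      _ = D (Pi.single j 1) := by rw [hDP]
  -- hence D v = ∑ i, v i
  have i₀ : Fin n := ⟨0, by omega⟩
  have hDone_sum : ∀ v : Fin n → ℝ, D v = (∑ i, v i) * D (Pi.single i₀ 1) := by
    intro v
    have h2 : D v = ∑ i, v i * D (Pi.single i₀ 1) := by
      conv_lhs => rw [← Finset.univ_sum_single v]
      rw [map_sum]
      refine Finset.sum_congr rfl (fun i _ => ?_)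
      have h3 : Pi.single i (v i) = v i • (Pi.single i 1 : Fin n → ℝ) := by
        funext k
        by_cases h : k = i <;> simp [Pi.single_apply, h]
      rw [h3, map_smul, hswap i i₀, smul_eq_mul]
    rw [h2, Finset.sum_mul]
  have hDc : D (Pi.single i₀ 1) = 1 := by
    have h1 : D one = (∑ i : Fin n, (1:ℝ)) * D (Pi.single i₀ 1) := hDone_sum one
    rw [hEuler] at h1
    have hn0 : (n : ℝ) ≠ 0 := by positivity
    have : (∑ i : Fin n, (1:ℝ)) = (n : ℝ) := by simp
    rw [this] at h1
    field_simp at h1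
    linarith
  have hDsum : ∀ v : Fin n → ℝ, D v = ∑ i, v i := by
    intro v; rw [hDone_sum v, hDc, mul_one]
  -- gradient inequality: ∑ w ≤ f w on Γ
  have hgrad : ∀ w ∈ Γ, ∑ i, w i ≤ f w := by
    intro w hw
    set v : Fin n → ℝ := w - one with hv
    have hψ : HasDerivAt (fun t : ℝ => one + t • v) v 0 := by
      simpa using ((hasDerivAt_id (0 : ℝ)).smul_const v).const_add one
    have hfd0 : HasFDerivAt f D ((fun t : ℝ => one + t • v) 0) := by
      simpa using hfd
    have hg : HasDerivAt (f ∘ fun t : ℝ => one + t • v) (D v) 0 :=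
      hfd0.comp_hasDerivAt 0 hψ
    have hslope := hasDerivAt_iff_tendsto_slope.mp hg
    have hslope' : Filter.Tendsto (slope (f ∘ fun t : ℝ => one + t • v) 0)
        (nhdsWithin 0 (Set.Ioi 0)) (nhds (D v)) :=
      hslope.mono_left (nhdsWithin_mono 0 (fun t ht => ne_of_gt ht))
    have hbound : ∀ᶠ t in nhdsWithin 0 (Set.Ioi 0),
        slope (f ∘ fun t : ℝ => one + t • v) 0 t ≤ f w - f one := by
      filter_upwards [Ioo_mem_nhdsGT_of_mem (Set.left_mem_Ico.mpr one_pos)] with t ht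
      have hpt : one + t • v = (1 - t) • one + t • w := by
        rw [hv]; funext k
        simp only [Pi.add_apply, Pi.smul_apply, Pi.sub_apply, smul_eq_mul]
        ring
      have hconv := hf_convex.2 h1Γ hw (by linarith [ht.2] : (0:ℝ) ≤ 1 - t)
        (le_of_lt ht.1) (by ring)
      simp only [smul_eq_mul] at hconv
      rw [slope_def_field]
      simp only [Function.comp_apply, zero_smul, add_zero, sub_zero]
      rw [hpt]
      rw [div_le_iff₀ ht.1]
      calc f ((1 - t) • one + t • w) - f one
          ≤ (1 - t) * f one + t * f w - f one := by linarith [hconv]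
        _ = (f w - f one) * t := by ring
    have hle : D v ≤ f w - f one := le_of_tendsto hslope' hbound
    rw [hDsum v, hv] at hle
    have hsum : ∑ i, (w - one) i = (∑ i, w i) - n := by
      simp only [Pi.sub_apply]
      rw [Finset.sum_sub_distrib]
      simp [hone]
    rw [hsum, hfone] at hle
    linarith
  -- conclude
  intro z hz hz0 hSsum
  have hpos := comb_aux_sum_pos n m hm1 z hz0 hSsum
  calc (0:ℝ) < ∑ i, z i := hpos
    _ ≤ f z := hgrad z hz
end

section
/- Let n ≥ 2 and let Γ ⊆ ℝⁿ be an open symmetric convex cone containing the positive cone on which z₁ + … + z_n > 0 for every z ∈ Γ. Let f₁ : Γ → ℝ be a positive, smooth, concave function which is symmetric, strictly increasing in each argument, positively homogeneous of degree one, and satisfies f₁(1,…,1) = n. For ρ ∈ [0,1] define f_ρ(z) := (ρ/f₁(z) + (1−ρ)/f₀(z))⁻¹, where f₀(z) := z₁ + … + z_n. Then f_ρ : Γ → ℝ is itself a positive, smooth, concave function which is symmetric, strictly increasing in each argument, positively homogeneous of degree one, and satisfies f_ρ(1,…,1) = n. -/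
private lemma dpos {ρ u v : ℝ} (hρ₀ : 0 ≤ ρ) (hρ₁ : ρ ≤ 1) (hu : 0 < u) (hv : 0 < v) :
    0 < ρ / u + (1 - ρ) / v := by
  rcases eq_or_lt_of_le hρ₀ with h | h
  · rw [← h]
    simpa using div_pos one_pos hv
  · exact add_pos_of_pos_of_nonneg (div_pos h hu) (div_nonneg (by linarith) hv.le)

private lemma engel {x₁ x₂ y₁ y₂ : ℝ} (hy₁ : 0 < y₁) (hy₂ : 0 < y₂) :
    (x₁ + x₂) ^ 2 / (y₁ + y₂) ≤ x₁ ^ 2 / y₁ + x₂ ^ 2 / y₂ := by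
  rw [div_add_div _ _ hy₁.ne' hy₂.ne', div_le_div_iff₀ (by positivity) (by positivity)]
  nlinarith [sq_nonneg (x₁ * y₂ - x₂ * y₁), mul_pos hy₁ hy₂]

private lemma hscale {ρ u v c : ℝ} (hu : u ≠ 0) (hv : v ≠ 0) (hc : c ≠ 0) :
    (ρ / (c * u) + (1 - ρ) / (c * v))⁻¹ = c * (ρ / u + (1 - ρ) / v)⁻¹ := by
  have h : ρ / (c * u) + (1 - ρ) / (c * v) = (ρ / u + (1 - ρ) / v) * c⁻¹ := by
    field_simp
  rw [h, mul_inv, inv_inv, mul_comm]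

private lemma hsuper {ρ : ℝ} (hρ₀ : 0 ≤ ρ) (hρ₁ : ρ ≤ 1) {u₁ v₁ u₂ v₂ : ℝ}
    (hu₁ : 0 < u₁) (hv₁ : 0 < v₁) (hu₂ : 0 < u₂) (hv₂ : 0 < v₂) :
    (ρ / u₁ + (1 - ρ) / v₁)⁻¹ + (ρ / u₂ + (1 - ρ) / v₂)⁻¹
      ≤ (ρ / (u₁ + u₂) + (1 - ρ) / (v₁ + v₂))⁻¹ := by
  have hq : (0:ℝ) ≤ 1 - ρ := by linarith
  have hD₁ := dpos hρ₀ hρ₁ hu₁ hv₁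
  have hD₂ := dpos hρ₀ hρ₁ hu₂ hv₂
  have hDA := dpos hρ₀ hρ₁ (add_pos hu₁ hu₂) (add_pos hv₁ hv₂)
  set s₁ := (ρ / u₁ + (1 - ρ) / v₁)⁻¹ with hs₁
  set s₂ := (ρ / u₂ + (1 - ρ) / v₂)⁻¹ with hs₂
  have hs₁pos : 0 < s₁ := inv_pos.mpr hD₁
  have hs₂pos : 0 < s₂ := inv_pos.mpr hD₂
  have hSpos : 0 < s₁ + s₂ := add_pos hs₁pos hs₂pos
  have id1 : s₁ ^ 2 * (ρ / u₁ + (1 - ρ) / v₁) = s₁ := by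
    rw [hs₁, sq, mul_assoc, inv_mul_cancel₀ hD₁.ne', mul_one]
  have id2 : s₂ ^ 2 * (ρ / u₂ + (1 - ρ) / v₂) = s₂ := by
    rw [hs₂, sq, mul_assoc, inv_mul_cancel₀ hD₂.ne', mul_one]
  have e1 : (s₁ + s₂) ^ 2 / (u₁ + u₂) ≤ s₁ ^ 2 / u₁ + s₂ ^ 2 / u₂ := engel hu₁ hu₂
  have e2 : (s₁ + s₂) ^ 2 / (v₁ + v₂) ≤ s₁ ^ 2 / v₁ + s₂ ^ 2 / v₂ := engel hv₁ hv₂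
  have key : (s₁ + s₂) ^ 2 * (ρ / (u₁ + u₂) + (1 - ρ) / (v₁ + v₂)) ≤ s₁ + s₂ := by
    have h1 := mul_le_mul_of_nonneg_left e1 hρ₀
    have h2 := mul_le_mul_of_nonneg_left e2 hq
    calc (s₁ + s₂) ^ 2 * (ρ / (u₁ + u₂) + (1 - ρ) / (v₁ + v₂))
        = ρ * ((s₁ + s₂) ^ 2 / (u₁ + u₂)) + (1 - ρ) * ((s₁ + s₂) ^ 2 / (v₁ + v₂)) := by
          ring
      _ ≤ ρ * (s₁ ^ 2 / u₁ + s₂ ^ 2 / u₂) + (1 - ρ) * (s₁ ^ 2 / v₁ + s₂ ^ 2 / v₂) :=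
          add_le_add h1 h2
      _ = s₁ ^ 2 * (ρ / u₁ + (1 - ρ) / v₁) + s₂ ^ 2 * (ρ / u₂ + (1 - ρ) / v₂) := by
          ring
      _ = s₁ + s₂ := by rw [id1, id2]
  have hmul : (s₁ + s₂) * (ρ / (u₁ + u₂) + (1 - ρ) / (v₁ + v₂)) ≤ 1 := by
    nlinarith [key, hSpos, hDA]
  rw [← one_div, le_div_iff₀ hDA]
  exact hmul



/-- Lynch's nonlinear interpolation of a concave speed `f₁` with the
arithmetic-mean speed `f₀(z) = z₁ + ⋯ + z_n`. -/
noncomputable def lynchSpeed {n : ℕ} (f₁ : (Fin n → ℝ) → ℝ) (ρ : ℝ)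
    (z : Fin n → ℝ) : ℝ :=
  (ρ / f₁ z + (1 - ρ) / ∑ i, z i)⁻¹

/-- Each of Lynch's interpolated speeds `f_ρ` is itself a positive, smooth,
concave, symmetric, monotone, one-homogeneous, normalized speed. -/
theorem lynch_speed_admissible
    (n : ℕ) (hn : 2 ≤ n)
    (Γ : Set (Fin n → ℝ))
    (hΓ_open : IsOpen Γ)
    (hΓ_cone : ∀ c : ℝ, 0 < c → ∀ z ∈ Γ, c • z ∈ Γ)
    (hΓ_symm : ∀ σ : Equiv.Perm (Fin n), ∀ z ∈ Γ, (fun i => z (σ i)) ∈ Γ)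
    (hΓ_convex : Convex ℝ Γ)
    (hΓ_pos : ∀ z : Fin n → ℝ, (∀ i, 0 < z i) → z ∈ Γ)
    (hΓ_trace : ∀ z ∈ Γ, 0 < ∑ i, z i)
    (f₁ : (Fin n → ℝ) → ℝ)
    (hf₁_pos : ∀ z ∈ Γ, 0 < f₁ z)
    (hf₁_smooth : ContDiffOn ℝ (⊤ : ℕ∞) f₁ Γ)
    (hf₁_concave : ConcaveOn ℝ Γ f₁)
    (hf₁_symm : ∀ σ : Equiv.Perm (Fin n), ∀ z ∈ Γ, f₁ (fun i => z (σ i)) = f₁ z)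
    (hf₁_mono : ∀ w ∈ Γ, ∀ t : ℝ, 0 < t → ∀ i : Fin n,
        w + Pi.single i t ∈ Γ → f₁ w < f₁ (w + Pi.single i t))
    (hf₁_hom : ∀ c : ℝ, 0 < c → ∀ z ∈ Γ, f₁ (c • z) = c * f₁ z)
    (hf₁_norm : f₁ (fun _ => 1) = n)
    (ρ : ℝ) (hρ₀ : 0 ≤ ρ) (hρ₁ : ρ ≤ 1) :
    (∀ z ∈ Γ, 0 < lynchSpeed f₁ ρ z) ∧
    ContDiffOn ℝ (⊤ : ℕ∞) (lynchSpeed f₁ ρ) Γ ∧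
    ConcaveOn ℝ Γ (lynchSpeed f₁ ρ) ∧
    (∀ σ : Equiv.Perm (Fin n), ∀ z ∈ Γ,
        lynchSpeed f₁ ρ (fun i => z (σ i)) = lynchSpeed f₁ ρ z) ∧
    (∀ w ∈ Γ, ∀ t : ℝ, 0 < t → ∀ i : Fin n,
        w + Pi.single i t ∈ Γ →
        lynchSpeed f₁ ρ w < lynchSpeed f₁ ρ (w + Pi.single i t)) ∧
    (∀ c : ℝ, 0 < c → ∀ z ∈ Γ, lynchSpeed f₁ ρ (c • z) = c * lynchSpeed f₁ ρ z) ∧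
    lynchSpeed f₁ ρ (fun _ => 1) = n := by
  have hq : (0:ℝ) ≤ 1 - ρ := by linarith
  have hDz : ∀ z ∈ Γ, 0 < ρ / f₁ z + (1 - ρ) / ∑ i, z i := fun z hz =>
    dpos hρ₀ hρ₁ (hf₁_pos z hz) (hΓ_trace z hz)
  refine ⟨?_, ?_, ?_, ?_, ?_, ?_, ?_⟩
  · -- positivity
    intro z hz
    exact inv_pos.mpr (hDz z hz)
  · -- smoothness
    have hsum : ContDiff ℝ (⊤ : ℕ∞) (fun z : Fin n → ℝ => ∑ i, z i) :=
      ContDiff.sum fun i _ =>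
        (ContinuousLinearMap.proj i : (Fin n → ℝ) →L[ℝ] ℝ).contDiff
    have h1 : ContDiffOn ℝ (⊤ : ℕ∞) (fun z => ρ / f₁ z) Γ :=
      contDiffOn_const.div hf₁_smooth fun z hz => (hf₁_pos z hz).ne'
    have h2 : ContDiffOn ℝ (⊤ : ℕ∞) (fun z : Fin n → ℝ => (1 - ρ) / ∑ i, z i) Γ :=
      contDiffOn_const.div hsum.contDiffOn fun z hz => (hΓ_trace z hz).ne'
    exact (h1.add h2).inv fun z hz => (hDz z hz).ne'
  · -- concavity
    refine ⟨hΓ_convex, ?_⟩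
    intro x hx y hy a b ha hb hab
    rcases eq_or_lt_of_le ha with ha0 | hapos
    · have hb1 : b = 1 := by linarith
      simp [← ha0, hb1]
    rcases eq_or_lt_of_le hb with hb0 | hbpos
    · have ha1 : a = 1 := by linarith
      simp [← hb0, ha1]
    have hw : a • x + b • y ∈ Γ := hΓ_convex hx hy ha hb hab
    set u₁ := f₁ x with hu₁def
    set u₂ := f₁ y with hu₂def
    set v₁ := ∑ i, x i with hv₁def
    set v₂ := ∑ i, y i with hv₂def
    have hu₁ : 0 < u₁ := hf₁_pos x hx
    have hu₂ : 0 < u₂ := hf₁_pos y hy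
    have hv₁ : 0 < v₁ := hΓ_trace x hx
    have hv₂ : 0 < v₂ := hΓ_trace y hy
    have hsum_w : ∑ i, (a • x + b • y) i = a * v₁ + b * v₂ := by
      simp [hv₁def, hv₂def, Finset.sum_add_distrib, Finset.mul_sum]
    have hc1 : a * u₁ + b * u₂ ≤ f₁ (a • x + b • y) := by
      have := hf₁_concave.2 hx hy ha hb hab
      simpa [smul_eq_mul] using this
    have hDle : ρ / f₁ (a • x + b • y) + (1 - ρ) / ∑ i, (a • x + b • y) i
        ≤ ρ / (a * u₁ + b * u₂) + (1 - ρ) / (a * v₁ + b * v₂) := by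
      rw [hsum_w]
      have : ρ / f₁ (a • x + b • y) ≤ ρ / (a * u₁ + b * u₂) := by
        apply div_le_div_of_nonneg_left hρ₀ ?_ hc1
        positivity
      linarith
    have hstep1 : a * (ρ / u₁ + (1 - ρ) / v₁)⁻¹ + b * (ρ / u₂ + (1 - ρ) / v₂)⁻¹
        ≤ (ρ / (a * u₁ + b * u₂) + (1 - ρ) / (a * v₁ + b * v₂))⁻¹ := by
      have h1 := hscale (ρ := ρ) hu₁.ne' hv₁.ne' hapos.ne'
      have h2 := hscale (ρ := ρ) hu₂.ne' hv₂.ne' hbpos.ne'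
      rw [← h1, ← h2]
      exact hsuper hρ₀ hρ₁ (mul_pos hapos hu₁) (mul_pos hapos hv₁)
        (mul_pos hbpos hu₂) (mul_pos hbpos hv₂)
    have hstep2 : (ρ / (a * u₁ + b * u₂) + (1 - ρ) / (a * v₁ + b * v₂))⁻¹
        ≤ (ρ / f₁ (a • x + b • y) + (1 - ρ) / ∑ i, (a • x + b • y) i)⁻¹ := by
      exact inv_anti₀ (hDz _ hw) hDle
    calc a • lynchSpeed f₁ ρ x + b • lynchSpeed f₁ ρ y
        = a * (ρ / u₁ + (1 - ρ) / v₁)⁻¹ + b * (ρ / u₂ + (1 - ρ) / v₂)⁻¹ := by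
          simp [lynchSpeed, smul_eq_mul, hu₁def, hu₂def, hv₁def, hv₂def]
      _ ≤ _ := le_trans hstep1 hstep2
  · -- symmetry
    intro σ z hz
    simp only [lynchSpeed]
    rw [hf₁_symm σ z hz, Equiv.sum_comp σ z]
  · -- monotonicity
    intro w hw t ht i hwi
    set w' := w + Pi.single i t with hw'def
    have hf : f₁ w < f₁ w' := hf₁_mono w hw t ht i hwi
    have hsw : ∑ j, w' j = (∑ j, w j) + t := by
      simp [hw'def, Finset.sum_add_distrib]
    have hfw : 0 < f₁ w := hf₁_pos w hw
    have hvw : 0 < ∑ j, w j := hΓ_trace w hw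
    have hfw' : 0 < f₁ w' := hf₁_pos w' hwi
    have hvw' : 0 < ∑ j, w' j := hΓ_trace w' hwi
    have hDlt : ρ / f₁ w' + (1 - ρ) / ∑ j, w' j < ρ / f₁ w + (1 - ρ) / ∑ j, w j := by
      have hvlt : (∑ j, w j) < ∑ j, w' j := by rw [hsw]; linarith
      rcases eq_or_lt_of_le hρ₀ with h0 | hρpos
      · rw [← h0]
        simp only [zero_div, zero_add, sub_zero]
        exact div_lt_div_of_pos_left one_pos hvw hvlt
      · have h1 : ρ / f₁ w' < ρ / f₁ w := div_lt_div_of_pos_left hρpos hfw hf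
        have h2 : (1 - ρ) / ∑ j, w' j ≤ (1 - ρ) / ∑ j, w j :=
          div_le_div_of_nonneg_left hq hvw hvlt.le
        linarith
    exact inv_strictAnti₀ (hDz w' hwi) hDlt
  · -- homogeneity
    intro c hc z hz
    simp only [lynchSpeed]
    have h₂ : ∑ i, (c • z) i = c * ∑ i, z i := by
      simp [Finset.mul_sum]
    rw [hf₁_hom c hc z hz, h₂]
    exact hscale (hf₁_pos z hz).ne' (hΓ_trace z hz).ne' hc.ne'
  · -- normalization
    have hn0 : (n:ℝ) ≠ 0 := by positivity
    simp only [lynchSpeed, hf₁_norm]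
    rw [show ∑ _i : Fin n, (1:ℝ) = (n:ℝ) by simp]
    rw [← add_div, show ρ + (1 - ρ) = 1 by ring, one_div, inv_inv]
end

section
/- Let n ≥ 2 and let Γ ⊆ ℝⁿ be an open symmetric cone such that w + v ∈ Γ whenever w ∈ Γ and v ∈ ℝⁿ has all entries nonnegative, and such that e := (0,1,…,1) ∈ Γ. Let f : Γ → ℝ be symmetric, strictly increasing in each argument, and positively homogeneous of degree one, with f(e) > 0, and set c₁ := f(e)⁻¹. If z ∈ Γ satisfies z₁ ≤ z₂ ≤ … ≤ z_n, z_n > 0, and z_n ≤ c₁ f(z), then z₁ ≥ 0. -/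
theorem aux_mono_le (n : ℕ) (Γ : Set (Fin n → ℝ))
    (hΓ_up : ∀ w ∈ Γ, ∀ v : Fin n → ℝ, (∀ i, 0 ≤ v i) → w + v ∈ Γ)
    (f : (Fin n → ℝ) → ℝ)
    (hf_mono : ∀ w ∈ Γ, ∀ t : ℝ, 0 < t → ∀ i : Fin n,
        w + Pi.single i t ∈ Γ → f w < f (w + Pi.single i t))
    (w : Fin n → ℝ) (hw : w ∈ Γ) (v : Fin n → ℝ) (hv : ∀ i, 0 ≤ v i) :
    f w ≤ f (w + v) := by
  have key : ∀ s : Finset (Fin n), f w ≤ f (w + ∑ i ∈ s, Pi.single i (v i)) := by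
    intro s
    induction s using Finset.induction with
    | empty => simp
    | @insert a s ha ih =>
      have hnn : ∀ j, 0 ≤ (∑ i ∈ s, Pi.single i (v i)) j := by
        intro j
        rw [Finset.sum_apply]
        refine Finset.sum_nonneg fun i _ => ?_
        rw [Pi.single_apply]
        split_ifs with h
        · subst h; exact hv j
        · exact le_rfl
      have hmem : w + ∑ i ∈ s, Pi.single i (v i) ∈ Γ := hΓ_up w hw _ hnn
      rw [Finset.sum_insert ha]
      rcases eq_or_lt_of_le (hv a) with h0 | h0
      · rw [← h0]
        simpa using ih
      · have hnn2 : ∀ j, 0 ≤ (Pi.single a (v a) : Fin n → ℝ) j := by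
          intro j
          rw [Pi.single_apply]
          split_ifs with h
          · exact hv a
          · exact le_rfl
        have hmem2 : (w + ∑ i ∈ s, Pi.single i (v i)) + Pi.single a (v a) ∈ Γ :=
          hΓ_up _ hmem _ hnn2
        have hlt := hf_mono _ hmem (v a) h0 a hmem2
        have heq : w + (Pi.single a (v a) + ∑ i ∈ s, Pi.single i (v i)) =
            (w + ∑ i ∈ s, Pi.single i (v i)) + Pi.single a (v a) := by abel
        rw [heq]
        exact ih.trans hlt.le
  have hv_eq : v = ∑ i, Pi.single i (v i) := (Finset.univ_sum_single v).symm
  calc f w ≤ f (w + ∑ i, Pi.single i (v i)) := key Finset.univ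
    _ = f (w + v) := by rw [← hv_eq]

theorem aux_mono_lt (n : ℕ) (Γ : Set (Fin n → ℝ))
    (hΓ_up : ∀ w ∈ Γ, ∀ v : Fin n → ℝ, (∀ i, 0 ≤ v i) → w + v ∈ Γ)
    (f : (Fin n → ℝ) → ℝ)
    (hf_mono : ∀ w ∈ Γ, ∀ t : ℝ, 0 < t → ∀ i : Fin n,
        w + Pi.single i t ∈ Γ → f w < f (w + Pi.single i t))
    (w : Fin n → ℝ) (hw : w ∈ Γ) (v : Fin n → ℝ) (hv : ∀ i, 0 ≤ v i)
    (i₀ : Fin n) (hi₀ : 0 < v i₀) :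
    f w < f (w + v) := by
  have hsingle : ∀ j, 0 ≤ (Pi.single i₀ (v i₀) : Fin n → ℝ) j := by
    intro j
    rw [Pi.single_apply]
    split_ifs with h
    · exact hi₀.le
    · exact le_rfl
  have hmem1 : w + Pi.single i₀ (v i₀) ∈ Γ := hΓ_up w hw _ hsingle
  have h1 : f w < f (w + Pi.single i₀ (v i₀)) := hf_mono w hw (v i₀) hi₀ i₀ hmem1
  have hrest : ∀ j, 0 ≤ (v - Pi.single i₀ (v i₀) : Fin n → ℝ) j := by
    intro j
    simp only [Pi.sub_apply, Pi.single_apply]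
    split_ifs with h
    · subst h; simp
    · simpa using hv j
  have h2 : f (w + Pi.single i₀ (v i₀)) ≤
      f ((w + Pi.single i₀ (v i₀)) + (v - Pi.single i₀ (v i₀))) :=
    aux_mono_le n Γ hΓ_up f hf_mono _ hmem1 _ hrest
  have heq : (w + Pi.single i₀ (v i₀)) + (v - Pi.single i₀ (v i₀)) = w + v := by abel
  rw [heq] at h2
  exact h1.trans_le h2

/-- The `1`-cylindrical pinching condition `κ_n ≤ c₁ F` forces weak convexity. -/
theorem one_cylindrical_pinching_implies_convexity
    (n : ℕ) (hn : 2 ≤ n)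
    (Γ : Set (Fin n → ℝ))
    (hΓ_open : IsOpen Γ)
    (hΓ_cone : ∀ c : ℝ, 0 < c → ∀ z ∈ Γ, c • z ∈ Γ)
    (hΓ_symm : ∀ σ : Equiv.Perm (Fin n), ∀ z ∈ Γ, (fun i => z (σ i)) ∈ Γ)
    (hΓ_up : ∀ w ∈ Γ, ∀ v : Fin n → ℝ, (∀ i, 0 ≤ v i) → w + v ∈ Γ)
    (heΓ : (fun i : Fin n => if (i : ℕ) = 0 then (0 : ℝ) else 1) ∈ Γ)
    (f : (Fin n → ℝ) → ℝ)
    (hf_symm : ∀ σ : Equiv.Perm (Fin n), ∀ z ∈ Γ, f (fun i => z (σ i)) = f z)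
    (hf_mono : ∀ w ∈ Γ, ∀ t : ℝ, 0 < t → ∀ i : Fin n,
        w + Pi.single i t ∈ Γ → f w < f (w + Pi.single i t))
    (hf_hom : ∀ c : ℝ, 0 < c → ∀ z ∈ Γ, f (c • z) = c * f z)
    (hfe : 0 < f (fun i : Fin n => if (i : ℕ) = 0 then (0 : ℝ) else 1))
    (z : Fin n → ℝ) (hzΓ : z ∈ Γ) (hz_sorted : Monotone z)
    (hzn_pos : 0 < z ⟨n - 1, by omega⟩)
    (hpinch : z ⟨n - 1, by omega⟩ ≤
        (f (fun i : Fin n => if (i : ℕ) = 0 then (0 : ℝ) else 1))⁻¹ * f z) :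
    0 ≤ z ⟨0, by omega⟩ := by
  by_contra hneg
  push_neg at hneg
  set e : Fin n → ℝ := fun i => if (i : ℕ) = 0 then (0 : ℝ) else 1 with he
  set m : ℝ := z ⟨n - 1, by omega⟩ with hm
  set v : Fin n → ℝ := m • e - z with hv_def
  have hmax : ∀ i : Fin n, z i ≤ m := by
    intro i
    exact hz_sorted (by simp [Fin.le_def]; omega)
  have hv : ∀ i, 0 ≤ v i := by
    intro i
    simp only [hv_def, Pi.sub_apply, Pi.smul_apply, he, smul_eq_mul]
    by_cases h : (i : ℕ) = 0
    · have : i = ⟨0, by omega⟩ := Fin.ext h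
      rw [this]
      simp [h]
      linarith
    · simp [h]
      exact hmax i
  have hi₀ : 0 < v ⟨0, by omega⟩ := by
    simp only [hv_def, Pi.sub_apply, Pi.smul_apply, he, smul_eq_mul]
    simp
    linarith
  have hlt : f z < f (z + v) := aux_mono_lt n Γ hΓ_up f hf_mono z hzΓ v hv _ hi₀
  have heq : z + v = m • e := by simp [hv_def]
  rw [heq] at hlt
  have hfm : f (m • e) = m * f e := hf_hom m hzn_pos e heΓ
  rw [hfm] at hlt
  rw [inv_mul_eq_div, le_div_iff₀ hfe] at hpinch
  linarith
end

section
/- Let n ≥ 2 and 0 ≤ m ≤ n−2, and let Γ ⊆ ℝⁿ be an open symmetric cone containing the (m+1)-positive cone Γ_{m+1}ⁿ. Let f : Γ → ℝ be symmetric, strictly increasing in each argument, and positively homogeneous of degree one, and suppose f(e_m) > 0 where e_m := (0,…,0,1,…,1) has m zeros followed by n−m ones; set c_m := f(e_m)⁻¹. If z ∈ Γ satisfies 0 ≤ z₁ ≤ z₂ ≤ … ≤ z_n, f(z) > 0, and z₁ + … + z_{m+1} ≥ c_m f(z), then either z₁ + … + z_m > 0, or else z₁ = … = z_m = 0 and z_{m+1}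 = … = z_n > 0. -/
/-- Rigidity underlying the cylindrical estimates for convex speeds: a weakly
convex point with `κ₁ + ⋯ + κ_{m+1} ≥ c_m F` is either `m`-strictly convex or
an exact `m`-cylindrical point. -/
theorem cylindrical_rigidity_convex_speeds
    (n m : ℕ) (hn : 2 ≤ n) (hm : m ≤ n - 2)
    (Γ : Set (Fin n → ℝ))
    (hΓ_open : IsOpen Γ)
    (hΓ_cone : ∀ c : ℝ, 0 < c → ∀ z ∈ Γ, c • z ∈ Γ)
    (hΓ_symm : ∀ σ : Equiv.Perm (Fin n), ∀ z ∈ Γ, (fun i => z (σ i)) ∈ Γ)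
    (hΓ_contains : ∀ z : Fin n → ℝ,
        (∀ S : Finset (Fin n), S.card = m + 1 → 0 < ∑ i ∈ S, z i) → z ∈ Γ)
    (f : (Fin n → ℝ) → ℝ)
    (hf_symm : ∀ σ : Equiv.Perm (Fin n), ∀ z ∈ Γ, f (fun i => z (σ i)) = f z)
    (hf_mono : ∀ w ∈ Γ, ∀ t : ℝ, 0 < t → ∀ i : Fin n,
        w + Pi.single i t ∈ Γ → f w < f (w + Pi.single i t))
    (hf_hom : ∀ c : ℝ, 0 < c → ∀ z ∈ Γ, f (c • z) = c * f z)
    (hfe : 0 < f (fun i : Fin n => if (i : ℕ) < m then (0 : ℝ) else 1))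
    (z : Fin n → ℝ) (hzΓ : z ∈ Γ) (hz_sorted : Monotone z)
    (hz₁ : 0 ≤ z ⟨0, by omega⟩) (hfz : 0 < f z)
    (hpinch : (f (fun i : Fin n => if (i : ℕ) < m then (0 : ℝ) else 1))⁻¹ * f z ≤
        ∑ i ∈ Finset.univ.filter (fun i : Fin n => (i : ℕ) < m + 1), z i) :
    (0 < ∑ i ∈ Finset.univ.filter (fun i : Fin n => (i : ℕ) < m), z i) ∨
      ((∀ i : Fin n, (i : ℕ) < m → z i = 0) ∧
        ∃ c : ℝ, 0 < c ∧ ∀ i : Fin n, m ≤ (i : ℕ) → z i = c) := by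
  have hmn : m < n := by omega
  have hnn : ∀ i : Fin n, 0 ≤ z i := fun i =>
    le_trans hz₁ (hz_sorted (show (⟨0, by omega⟩ : Fin n) ≤ i by simp [Fin.le_def]))
  by_cases hzero : ∀ i : Fin n, (i : ℕ) < m → z i = 0
  · right
    refine ⟨hzero, ?_⟩
    set e : Fin n → ℝ := fun i : Fin n => if (i : ℕ) < m then (0 : ℝ) else 1 with hedef
    set M : Fin n := ⟨m, hmn⟩ with hMdef
    set a : ℝ := z M with hadef
    -- the pinching sum equals z M
    have hsum : ∑ i ∈ Finset.univ.filter (fun i : Fin n => (i : ℕ) < m + 1), z i = a := by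
      rw [Finset.sum_eq_single_of_mem M (by simp [hMdef])]
      intro b hb hbM
      exact hzero b (by
        simp only [Finset.mem_filter] at hb
        have : (b : ℕ) ≠ m := fun h => hbM (Fin.ext h)
        omega)
    rw [hsum] at hpinch
    have ha : 0 < a := lt_of_lt_of_le (mul_pos (inv_pos.2 hfe) hfz) hpinch
    have hfza : f z ≤ a * f e := by
      rw [mul_comm]
      exact (inv_mul_le_iff₀ hfe).mp hpinch
    -- membership lemma
    have hΓP : ∀ b : ℝ, 0 < b → ∀ w : Fin n → ℝ, (∀ i, 0 ≤ w i) →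
        (∀ i : Fin n, m ≤ (i : ℕ) → b ≤ w i) → w ∈ Γ := by
      intro b hb w h0 h1
      apply hΓ_contains
      intro S hS
      have hex : ∃ i ∈ S, m ≤ (i : ℕ) := by
        by_contra hcon
        push_neg at hcon
        have hsub : S ⊆ Finset.univ.filter (fun i : Fin n => (i : ℕ) < m) := by
          intro i hi; simp [hcon i hi]
        have hcard : (Finset.univ.filter (fun i : Fin n => (i : ℕ) < m)).card = m := by
          have : Finset.univ.filter (fun i : Fin n => (i : ℕ) < m) = Finset.Iio M := by
            ext i; simp [Fin.lt_def, hMdef]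
          rw [this, Fin.card_Iio]
        have := Finset.card_le_card hsub
        omega
      obtain ⟨i, hiS, hi⟩ := hex
      calc (0 : ℝ) < b := hb
        _ ≤ w i := h1 i hi
        _ ≤ ∑ j ∈ S, w j := Finset.single_le_sum (fun j _ => h0 j) hiS
    have heΓ : e ∈ Γ := by
      apply hΓP 1 one_pos
      · intro i; simp only [hedef]; split <;> norm_num
      · intro i hi; simp [hedef, Nat.not_lt.mpr hi]
    -- the key property
    set P : (Fin n → ℝ) → Prop :=
      fun w => (∀ i, 0 ≤ w i) ∧ ∀ i : Fin n, m ≤ (i : ℕ) → a ≤ w i with hPdef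
    have hPΓ : ∀ w, P w → w ∈ Γ := fun w hw => hΓP a ha w hw.1 hw.2
    -- strict monotonicity along componentwise order within P
    have hmono : ∀ u v : Fin n → ℝ, P u → P v → (∀ i, u i ≤ v i) →
        ∀ j : Fin n, u j < v j → f u < f v := by
      intro u v hPu hPv huv j hj
      set w : ℕ → Fin n → ℝ := fun k i => if (i : ℕ) < k then v i else u i with hwdef
      have hPw : ∀ k, P (w k) := by
        intro k
        constructor
        · intro i; simp only [hwdef]; split
          · exact hPv.1 i
          · exact hPu.1 i
        · intro i hi; simp only [hwdef]; split
          · exact hPv.2 i hi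
          · exact hPu.2 i hi
      have key : ∀ k, k ≤ n → f u ≤ f (w k) ∧
          (∀ j : Fin n, (j : ℕ) < k → u j < v j → f u < f (w k)) := by
        intro k
        induction k with
        | zero =>
          intro _
          have : w 0 = u := by funext i; simp [hwdef]
          rw [this]
          exact ⟨le_refl _, fun j hj => absurd hj (by omega)⟩
        | succ k ih =>
          intro hk1
          have hk : k < n := by omega
          obtain ⟨ih1, ih2⟩ := ih (by omega)
          set K : Fin n := ⟨k, hk⟩ with hKdef
          have hwk1 : w (k + 1) = w k + Pi.single K (v K - u K) := by
            funext i
            by_cases hik : i = K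
            · subst hik
              simp [hwdef, hKdef, Pi.single_eq_same]
            · have hne : (i : ℕ) ≠ k := fun h => hik (Fin.ext h)
              have : (Pi.single K (v K - u K) : Fin n → ℝ) i = 0 := by
                simp [Pi.single_eq_of_ne hik]
              simp only [Pi.add_apply, this, add_zero, hwdef]
              by_cases hik' : (i : ℕ) < k
              · simp [hik', Nat.lt_succ_of_lt hik']
              · have : ¬ (i : ℕ) < k + 1 := by omega
                simp [hik', this]
          rcases eq_or_lt_of_le (huv K) with heq | hlt
          · have hwe : w (k + 1) = w k := by rw [hwk1, heq]; simp
            rw [hwe]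
            refine ⟨ih1, fun j hj hjlt => ?_⟩
            by_cases hjk : (j : ℕ) < k
            · exact ih2 j hjk hjlt
            · have : j = K := Fin.ext (show (j : ℕ) = k by omega)
              rw [this] at hjlt
              exact absurd heq (ne_of_lt hjlt)
          · have hstep : f (w k) < f (w (k + 1)) := by
              have h1 := hPΓ _ (hPw k)
              have h2 := hPΓ _ (hPw (k + 1))
              rw [hwk1] at h2
              have := hf_mono (w k) h1 (v K - u K) (by linarith) K h2
              rwa [← hwk1] at this
            exact ⟨le_of_lt (lt_of_le_of_lt ih1 hstep),
              fun j _ _ => lt_of_le_of_lt ih1 hstep⟩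
      have hwn : w n = v := by
        funext i; simp [hwdef, i.isLt]
      have := (key n (le_refl n)).2 j j.isLt hj
      rwa [hwn] at this
    -- apply with u = a • e, v = z
    have hPu : P (a • e) := by
      constructor
      · intro i
        simp only [Pi.smul_apply, smul_eq_mul, hedef]
        split
        · simp
        · simpa using le_of_lt ha
      · intro i hi
        simp [hedef, Nat.not_lt.mpr hi]
    have hPz : P z := by
      refine ⟨hnn, fun i hi => ?_⟩
      exact hz_sorted (show M ≤ i by simp [Fin.le_def, hMdef, hi])
    have huz : ∀ i, (a • e) i ≤ z i := by
      intro i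
      simp only [Pi.smul_apply, smul_eq_mul, hedef]
      split
      · next h => simp [hzero i h]
      · next h =>
        simpa using hz_sorted (show M ≤ i by simp [Fin.le_def, hMdef]; omega)
    have hfu : f (a • e) = a * f e := hf_hom a ha e heΓ
    refine ⟨a, ha, fun i hi => ?_⟩
    by_contra hne
    have hlt : (a • e) i < z i := by
      have hea : (a • e) i = a := by
        simp [hedef, Nat.not_lt.mpr hi]
      exact lt_of_le_of_ne (huz i) (fun h => hne (by rw [← h, hea]))
    have := hmono (a • e) z hPu hPz huz i hlt
    rw [hfu] at this
    linarith
  · left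
    push_neg at hzero
    obtain ⟨i, him, hiz⟩ := hzero
    apply Finset.sum_pos' (fun j _ => hnn j)
    exact ⟨i, by simp [him], lt_of_le_of_ne (hnn i) (Ne.symm hiz)⟩
end
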